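/- Let A be a Banach algebra and X a Banach A-bimodule. Suppose g : A → X satisfies ‖g(a²) − a·g(a) − g(a)·a‖ ≤ 2θ‖a‖^p for all a ∈ A, where θ ≥ 0 and p < 1, and suppose the limit δ(a) := lim_{n→∞} 2^{−n} g(2^n a) exists for all a ∈ A. Then δ(a²) = a·δ(a) + δ(a)·a for all a ∈ A. -/

import Mathlib

/-!
Put `t = 2ⁿ`. Rescaling the hypothesis at `t • a` and dividing by `t²` shows that
`t⁻² • (g (t² • a²) - (t • a) • g (t • a) - op (t • a) • g (t • a))` has norm
`O(‖a‖ᵖ ‖t‖^(p-2))`, which tends to `0` because `p < 2`. On the other hand, since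
`(t • a)² = t² • a²`, the same expression is a combination of the sequences
`t⁻¹ • g (t • a)` and `(t²)⁻¹ • g (t² • a²)` defining `δ a` and `δ (a²)`, so it tends to
`δ (a²) - a • δ a - op a • δ a`.
-/

open Filter Topology MulOpposite

set_option linter.unusedSectionVars false
set_option linter.unusedVariables false

def jordanDefect {A X : Type*} [Monoid A] [SMul A X] [SMul Aᵐᵒᵖ X] [Sub X] (g : A → X)
    (a : A) : X :=
  g (a ^ 2) - a • g a - op a • g a

section Algebraic

variable {𝕜 A X : Type*} [Field 𝕜] [Ring A] [Algebra 𝕜 A] [AddCommGroup X] [Module 𝕜 X]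
  [Module A X] [Module Aᵐᵒᵖ X] [IsScalarTower 𝕜 A X] [IsScalarTower 𝕜 Aᵐᵒᵖ X]

theorem inv_sq_smul_jordanDefect_smul (g : A → X) (t : 𝕜) (a : A) :
    (t ^ 2)⁻¹ • jordanDefect g (t • a) =
      (t ^ 2)⁻¹ • g (t ^ 2 • a ^ 2) - a • (t⁻¹ • g (t • a)) - op a • (t⁻¹ • g (t • a)) := by
  have h : (t ^ 2)⁻¹ * t = t⁻¹ := by
    rcases eq_or_ne t 0 with rfl | ht
    · simp
    · field_simp
  simp only [jordanDefect, smul_sub, smul_pow, op_smul, smul_assoc, smul_comm _ a,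
    smul_comm _ (op a), smul_smul, h]

end Algebraic

section Analytic

variable {𝕜 A X : Type*} [NormedField 𝕜] [NormedRing A] [NormedAlgebra 𝕜 A]
  [NormedAddCommGroup X] [NormedSpace 𝕜 X]

theorem norm_inv_sq_smul_jordanDefect_smul_le [SMul A X] [SMul Aᵐᵒᵖ X] {g : A → X} {C p : ℝ}
    (hg : ∀ a, ‖jordanDefect g a‖ ≤ C * ‖a‖ ^ p) {t : 𝕜} (ht : t ≠ 0) (a : A) :
    ‖(t ^ 2)⁻¹ • jordanDefect g (t • a)‖ ≤ C * ‖a‖ ^ p * ‖t‖ ^ (p - 2) := by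
  have ht' : 0 < ‖t‖ := norm_pos_iff.mpr ht
  calc ‖(t ^ 2)⁻¹ • jordanDefect g (t • a)‖ = ‖jordanDefect g (t • a)‖ / ‖t‖ ^ 2 := by
        rw [norm_smul, norm_inv, norm_pow, inv_mul_eq_div]
    _ ≤ C * (‖t‖ * ‖a‖) ^ p / ‖t‖ ^ 2 := by
        gcongr
        simpa only [norm_smul] using hg (t • a)
    _ = C * ‖a‖ ^ p * ‖t‖ ^ (p - 2) := by
        rw [Real.mul_rpow ht'.le (norm_nonneg a), Real.rpow_sub ht', Real.rpow_two]
        ring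

variable [Module A X] [Module Aᵐᵒᵖ X] [IsScalarTower 𝕜 A X] [IsScalarTower 𝕜 Aᵐᵒᵖ X]
  [ContinuousConstSMul A X] [ContinuousConstSMul Aᵐᵒᵖ X]

theorem jordanDefect_eq_zero_of_tendsto {ι : Type*} {l : Filter ι} [l.NeBot] {t : ι → 𝕜}
    (ht : Tendsto (fun n => ‖t n‖) l atTop) {g δ : A → X} {C p : ℝ} (hp : p < 2)
    (hg : ∀ a, ‖jordanDefect g a‖ ≤ C * ‖a‖ ^ p) (a : A)
    (hlin : Tendsto (fun n => (t n)⁻¹ • g (t n • a)) l (𝓝 (δ a)))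
    (hsq : Tendsto (fun n => (t n ^ 2)⁻¹ • g (t n ^ 2 • a ^ 2)) l (𝓝 (δ (a ^ 2)))) :
    jordanDefect δ a = 0 := by
  have hlim : Tendsto (fun n => (t n ^ 2)⁻¹ • jordanDefect g (t n • a)) l
      (𝓝 (jordanDefect δ a)) := by
    simp only [inv_sq_smul_jordanDefect_smul]
    exact (hsq.sub (hlin.const_smul a)).sub (hlin.const_smul (op a))
  have hbound : Tendsto (fun n => C * ‖a‖ ^ p * ‖t n‖ ^ (p - 2)) l (𝓝 0) := by
    simpa using ((tendsto_rpow_neg_atTop (by linarith : 0 < 2 - p)).comp ht).const_mul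
      (C * ‖a‖ ^ p)
  have hzero : Tendsto (fun n => (t n ^ 2)⁻¹ • jordanDefect g (t n • a)) l (𝓝 0) := by
    refine squeeze_zero_norm' ?_ hbound
    filter_upwards [ht.eventually_gt_atTop 0] with n hn
    exact norm_inv_sq_smul_jordanDefect_smul_le hg (norm_pos_iff.mp hn) a
  exact tendsto_nhds_unique hlim hzero

end Analytic

section

variable {A X : Type*}
  [NormedRing A] [NormedAlgebra ℂ A] [CompleteSpace A]
  [NormedAddCommGroup X] [NormedSpace ℂ X] [CompleteSpace X]
  [Module A X] [Module Aᵐᵒᵖ X]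
  [IsBoundedSMul A X] [IsBoundedSMul Aᵐᵒᵖ X]
  [SMulCommClass A Aᵐᵒᵖ X]
  [IsScalarTower ℂ A X] [IsScalarTower ℂ Aᵐᵒᵖ X]

/-- A Jordan derivation from `A` into the bimodule `X`: a `ℂ`-linear map `δ` with
`δ(a²) = a·δ(a) + δ(a)·a`. -/
def IsJordanDeriv (δ : A → X) : Prop :=
  (∀ x y : A, δ (x + y) = δ x + δ y) ∧ (∀ (μ : ℂ) (x : A), δ (μ • x) = μ • δ x) ∧
    ∀ a : A, δ (a ^ 2) = a • δ a + op a • δ a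

/-- A generalized Jordan derivation: a `ℂ`-linear map `d` such that there is a Jordan
derivation `δ` with `d(a²) = a·d(a) + δ(a)·a`. -/
def IsGenJordanDeriv (d : A → X) : Prop :=
  (∀ x y : A, d (x + y) = d x + d y) ∧ (∀ (μ : ℂ) (x : A), d (μ • x) = μ • d x) ∧
    ∃ δ : A → X, IsJordanDeriv δ ∧ ∀ a : A, d (a ^ 2) = a • d a + op a • δ a

theorem stmt_general (g δ : A → X) (θ p : ℝ) (hp : p < 1)
    (hg : ∀ a : A, ‖g (a ^ 2) - a • g a - op a • g a‖ ≤ 2 * θ * ‖a‖ ^ p)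
    (hδ : ∀ a : A, Tendsto (fun n : ℕ => ((2 : ℂ) ^ n)⁻¹ • g ((2 : ℂ) ^ n • a)) atTop (𝓝 (δ a))) :
    ∀ a : A, δ (a ^ 2) = a • δ a + op a • δ a := by
  intro a
  have hnorm : Tendsto (fun n : ℕ => ‖(2 : ℂ) ^ n‖) atTop atTop := by
    simpa using tendsto_pow_atTop_atTop_of_one_lt one_lt_two
  have hsq : Tendsto (fun n : ℕ => (((2 : ℂ) ^ n) ^ 2)⁻¹ • g (((2 : ℂ) ^ n) ^ 2 • a ^ 2)) atTop
      (𝓝 (δ (a ^ 2))) := by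
    simpa only [← pow_mul, Function.comp_def] using
      (hδ (a ^ 2)).comp (strictMono_mul_right_of_pos two_pos).tendsto_atTop
  have h := jordanDefect_eq_zero_of_tendsto hnorm (by linarith) hg a (hδ a) hsq
  rwa [jordanDefect, sub_sub, sub_eq_zero] at h

theorem stmt (g δ : A → X) (θ p : ℝ) (hθ : 0 ≤ θ) (hp : p < 1)
    (hg : ∀ a : A, ‖g (a ^ 2) - a • g a - op a • g a‖ ≤ 2 * θ * ‖a‖ ^ p)
    (hδ : ∀ a : A, Tendsto (fun n : ℕ => ((2 : ℂ) ^ n)⁻¹ • g ((2 : ℂ) ^ n • a)) atTop (𝓝 (δ a))) :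
    ∀ a : A, δ (a ^ 2) = a • δ a + op a • δ a :=
  stmt_general g δ θ p hp hg hδ
end
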